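/- arXiv:1810.01462 — 3 statements merged into one kernel-verified Lean document; each statement's English description precedes it below -/
import Mathlib

section
/- Fix Q* ≥ 0 and suppose Assumptions H1 and H2 hold. Then there exists a constant R(Q*) ≥ 0 such that for any w ∈ 𝒬 with Q(w) ≤ Q*, the following norms are all bounded by R(Q*): ‖A_L^α w‖, ‖A_L^β w‖, ‖(A_L^α)² w‖, ‖A_L^α A_L^β w‖, ‖A_L^β A_L^α w‖ and ‖(A_L^β)² w‖. -/
noncomputable section
open Set

/-- `ℋ = ℓ²(ℕ*, ℝ)`; Lean index `k : ℕ` corresponds to the cluster size `n = k + 1`. -/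
abbrev Hsp := lp (fun _ : ℕ => ℝ) 2

/-- Assumption H1: `a k` stands for `α_{k+1}` and `b k` for `β_{k+1}` (`k : ℕ`),
nonnegative coefficients with increments bounded by `B`. -/
def HypH1 (a b : ℕ → ℝ) (B : ℝ) : Prop :=
  0 ≤ B ∧ (∀ n, 0 ≤ a n ∧ 0 ≤ b n) ∧
    (∀ n, |a (n + 1) - a n| ≤ B ∧ |b (n + 1) - b n| ≤ B)

/-- Assumption H2: `0 ≤ α_n, β_n ≤ K n^γ` with `0 ≤ γ ≤ 1/2`. -/
def HypH2 (a b : ℕ → ℝ) (γ K : ℝ) : Prop :=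
  0 ≤ γ ∧ γ ≤ 1 / 2 ∧ 0 < K ∧
    ∀ n : ℕ, 0 ≤ a n ∧ a n ≤ K * ((n : ℝ) + 1) ^ γ ∧
      0 ≤ b n ∧ b n ≤ K * ((n : ℝ) + 1) ^ γ

/-- The (quasi-linear) Becker–Döring operator `A(c)` acting coordinatewise:
`(A(c)u)₁ = -2β₁ c u₁ + α₂ u₂ + Σ_{m ≥ 2} (α_m - β_m c) u_m` and, for `n ≥ 2`,
`(A(c)u)_n = β_{n-1} c u_{n-1} - (β_n c + α_n) u_n + α_{n+1} u_{n+1}`. -/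
def Aop (a b : ℕ → ℝ) (c : ℝ) (u : ℕ → ℝ) : ℕ → ℝ := fun k =>
  if k = 0 then
    -2 * b 0 * c * u 0 + a 1 * u 1 +
      ∑' (j : ℕ), (if 1 ≤ j then (a j - b j * c) * u j else 0)
  else
    b (k - 1) * c * u (k - 1) - (b k * c + a k) * u k + a (k + 1) * u (k + 1)

/-- Membership in `𝒬`: nonnegative coordinates and finite total mass `Σ n u_n`. -/
def memQset (u : ℕ → ℝ) : Prop :=
  (∀ k, 0 ≤ u k) ∧ Summable (fun k : ℕ => ((k : ℝ) + 1) * u k)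

/-- The total mass `Q(u) = Σ_{n ≥ 1} n u_n`. -/
def Qmass (u : ℕ → ℝ) : ℝ := ∑' (k : ℕ), ((k : ℝ) + 1) * u k

/-- `λ_b = (1/2) max (B (1 + b), α₂)`. -/
def lamBD (a : ℕ → ℝ) (B c : ℝ) : ℝ := (1 / 2) * max (B * (1 + c)) (a 1)

/-- `u` is a global-in-time classical solution of the Becker–Döring Cauchy problem
`du/dt = A(u₁)u`, `u(0) = u⁰`, belonging to `C⁰(ℝ₊, 𝒬) ∩ C¹(ℝ₊, ℋ)`. -/
def IsBDSolution (a b : ℕ → ℝ) (u0 : Hsp) (u : ℝ → Hsp) : Prop :=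
  u 0 = u0 ∧ ContinuousOn u (Ici 0) ∧ (∀ t ∈ Ici (0 : ℝ), memQset (u t)) ∧
    ∃ u' : ℝ → Hsp, ContinuousOn u' (Ici 0) ∧
      ∀ t ∈ Ici (0 : ℝ), HasDerivWithinAt u (u' t) (Ici 0) t ∧
        ∀ k, (u' t) k = Aop a b ((u t) 0) (u t) k

/-- The linear operator `A_L^α`: `(A_L^α u)₁ = Σ_{n≥2} α_n u_n + α₂ u₂` and
`(A_L^α u)_m = α_{m+1} u_{m+1} - α_m u_m` for `m ≥ 2`
(coming from `A_L^α e₁ = 0`, `A_L^α e_n = α_n (e₁ + e_{n-1} - e_n)` for `n ≥ 2`). -/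
def ALalpha (a : ℕ → ℝ) (u : ℕ → ℝ) : ℕ → ℝ := fun k =>
  if k = 0 then (∑' (j : ℕ), if 1 ≤ j then a j * u j else 0) + a 1 * u 1
  else a (k + 1) * u (k + 1) - a k * u k

/-- The linear operator `A_L^β`: `(A_L^β u)₁ = -2β₁ u₁ - Σ_{n≥2} β_n u_n` and
`(A_L^β u)_m = β_{m-1} u_{m-1} - β_m u_m` for `m ≥ 2`
(coming from `A_L^β e₁ = β₁(e₂ - 2e₁)`, `A_L^β e_n = β_n (e_{n+1} - e_n - e₁)`). -/
def ALbeta (b : ℕ → ℝ) (u : ℕ → ℝ) : ℕ → ℝ := fun k =>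
  if k = 0 then -2 * b 0 * u 0 - ∑' (j : ℕ), if 1 ≤ j then b j * u j else 0
  else b (k - 1) * u (k - 1) - b k * u k

/-- The `ℓ²` norm of a sequence. -/
def l2norm (f : ℕ → ℝ) : ℝ := Real.sqrt (∑' (k : ℕ), (f k) ^ 2)

/-!
Both `A_L^α` and `A_L^β` only exchange mass between neighbouring sizes and with size 1, at rates
`α_n, β_n ≤ K √n` (because `γ ≤ 1/2`). So each of them maps the weighted `ℓ¹` space with weight
`ρ_n √n` into the one with weight `ρ_n`, with norm at most `6K`, for every nondecreasing weight `ρ`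
with `ρ_{n+1} ≤ 2 ρ_n`. Applying this with `ρ = 1` and `ρ_n = √n`, a product of two of the
operators is bounded from the weight `n`, i.e. by `Q(w)`, into `ℓ¹ ⊆ ℓ²`.
-/

open scoped ENNReal

namespace BeckerDoring

/-- Valued in `ℝ≥0∞`, so that it is defined without any summability assumption. -/
def weightedL1 (ρ : ℕ → ℝ≥0∞) (f : ℕ → ℝ) : ℝ≥0∞ := ∑' k, ρ k * ‖f k‖ₑ

lemma weightedL1_mono {ρ ρ' : ℕ → ℝ≥0∞} (h : ρ ≤ ρ') (f : ℕ → ℝ) :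
    weightedL1 ρ f ≤ weightedL1 ρ' f :=
  ENNReal.tsum_le_tsum fun k => mul_le_mul_left (h k) _

lemma weightedL1_mul_le {ρ σ : ℕ → ℝ≥0∞} {C : ℝ≥0∞} {c : ℕ → ℝ}
    (hc : ∀ k, ‖c k‖ₑ ≤ C * σ k) (u : ℕ → ℝ) :
    weightedL1 ρ (c * u) ≤ C * weightedL1 (ρ * σ) u := by
  rw [weightedL1, weightedL1, ← ENNReal.tsum_mul_left]
  refine ENNReal.tsum_le_tsum fun k => ?_
  calc ρ k * ‖c k * u k‖ₑ = ρ k * ‖c k‖ₑ * ‖u k‖ₑ := by rw [enorm_mul, mul_assoc]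
    _ ≤ ρ k * (C * σ k) * ‖u k‖ₑ := by gcongr; exact hc k
    _ = C * ((ρ * σ) k * ‖u k‖ₑ) := by rw [Pi.mul_apply]; ring

section
variable {ρ : ℕ → ℝ≥0∞} (f : ℕ → ℝ)

lemma weightedL1_eq_zero_add :
    weightedL1 ρ f = ρ 0 * ‖f 0‖ₑ + ∑' k, ρ (k + 1) * ‖f (k + 1)‖ₑ :=
  tsum_eq_zero_add' ENNReal.summable

lemma le_weightedL1 (j : ℕ) : ρ j * ‖f j‖ₑ ≤ weightedL1 ρ f :=
  ENNReal.le_tsum (f := fun k => ρ k * ‖f k‖ₑ) j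

lemma weightedL1_shift_le (n : ℕ) :
    ∑' k, ρ (k + n) * ‖f (k + n)‖ₑ ≤ weightedL1 ρ f :=
  ENNReal.tsum_comp_le_tsum_of_injective (add_left_injective n) (fun k => ρ k * ‖f k‖ₑ)

lemma mul_enorm_tsum_ite_le_weightedL1 (hρ : Monotone ρ) :
    ρ 0 * ‖∑' j, if 1 ≤ j then f j else 0‖ₑ ≤ weightedL1 ρ f := by
  calc ρ 0 * ‖∑' j, if 1 ≤ j then f j else 0‖ₑ
      ≤ ρ 0 * ∑' j, ‖f j‖ₑ := by
        gcongr
        refine enorm_tsum_le_tsum_enorm.trans (ENNReal.tsum_le_tsum fun j => ?_)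
        split_ifs <;> simp
    _ ≤ weightedL1 ρ f := by
        rw [← ENNReal.tsum_mul_left]
        exact ENNReal.tsum_le_tsum fun j => by gcongr; exact hρ (Nat.zero_le j)

end

def sqrtWeight (k : ℕ) : ℝ≥0∞ := ENNReal.ofReal √((k : ℝ) + 1)

lemma sqrtWeight_mono : Monotone sqrtWeight := fun j k hjk => by
  unfold sqrtWeight
  gcongr

lemma sqrtWeight_succ_le (k : ℕ) : sqrtWeight (k + 1) ≤ 2 * sqrtWeight k := by
  have h : √((k : ℝ) + 1 + 1) ≤ 2 * √((k : ℝ) + 1) := by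
    rw [Real.sqrt_le_iff, mul_pow, Real.sq_sqrt (by positivity)]
    exact ⟨by positivity, by linarith [k.cast_nonneg (α := ℝ)]⟩
  rw [sqrtWeight, sqrtWeight, Nat.cast_succ, ← ENNReal.ofReal_ofNat 2,
    ← ENNReal.ofReal_mul zero_le_two]
  exact ENNReal.ofReal_le_ofReal h

lemma one_le_sqrtWeight (k : ℕ) : 1 ≤ sqrtWeight k := by
  rw [sqrtWeight, ← ENNReal.ofReal_one]
  gcongr
  rw [Real.one_le_sqrt]
  linarith [k.cast_nonneg (α := ℝ)]

lemma sqrtWeight_mul_self (k : ℕ) : sqrtWeight k * sqrtWeight k = ENNReal.ofReal ((k : ℝ) + 1) := by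
  rw [sqrtWeight, ← ENNReal.ofReal_mul (Real.sqrt_nonneg _), Real.mul_self_sqrt (by positivity)]

lemma enorm_le_ofReal_mul_sqrtWeight {x K γ : ℝ} {k : ℕ} (hx : 0 ≤ x) (hK : 0 ≤ K)
    (hγ : γ ≤ 1 / 2) (h : x ≤ K * ((k : ℝ) + 1) ^ γ) :
    ‖x‖ₑ ≤ ENNReal.ofReal K * sqrtWeight k := by
  rw [Real.enorm_eq_ofReal_abs, abs_of_nonneg hx, sqrtWeight, ← ENNReal.ofReal_mul hK,
    Real.sqrt_eq_rpow]
  refine ENNReal.ofReal_le_ofReal (h.trans ?_)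
  gcongr
  · linarith [k.cast_nonneg (α := ℝ)]

lemma weightedL1_sqrtWeight_mul_self {u : ℕ → ℝ} (hu : memQset u) :
    weightedL1 (sqrtWeight * sqrtWeight) u = ENNReal.ofReal (Qmass u) := by
  rw [Qmass, ENNReal.ofReal_tsum_of_nonneg (fun k => mul_nonneg (by positivity) (hu.1 k)) hu.2]
  refine tsum_congr fun k => ?_
  rw [Pi.mul_apply, sqrtWeight_mul_self, Real.enorm_eq_ofReal_abs, abs_of_nonneg (hu.1 k),
    ← ENNReal.ofReal_mul (by positivity)]

lemma summable_sq_and_l2norm_le {f : ℕ → ℝ} {R : ℝ} (hR : 0 ≤ R)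
    (hf : weightedL1 1 f ≤ ENNReal.ofReal R) :
    Summable (fun k => f k ^ 2) ∧ l2norm f ≤ R := by
  simp only [weightedL1, Pi.one_apply, one_mul] at hf
  have hs : Summable fun k => ‖f k‖ :=
    tsum_enorm_ne_top_iff_summable_norm.1 (hf.trans_lt ENNReal.ofReal_lt_top).ne
  set S := ∑' k, ‖f k‖
  have hSR : S ≤ R := by
    rw [← ENNReal.ofReal_le_ofReal_iff hR,
      ENNReal.ofReal_tsum_of_nonneg (fun _ => norm_nonneg _) hs]
    simpa only [ofReal_norm] using hf
  have hle : ∀ k, f k ^ 2 ≤ S * ‖f k‖ := fun k => by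
    rw [← sq_abs, sq, ← Real.norm_eq_abs]
    exact mul_le_mul_of_nonneg_right (hs.le_tsum k fun j _ => norm_nonneg _) (norm_nonneg _)
  have hsq : Summable (fun k => f k ^ 2) :=
    Summable.of_nonneg_of_le (fun k => sq_nonneg _) hle (hs.mul_left S)
  refine ⟨hsq, ?_⟩
  calc l2norm f ≤ √(S * S) := by
        rw [l2norm, ← tsum_mul_left]
        exact Real.sqrt_le_sqrt (hsq.tsum_le_tsum hle (hs.mul_left S))
    _ = S := Real.sqrt_mul_self (tsum_nonneg fun _ => norm_nonneg _)
    _ ≤ R := hSR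

section
variable {ρ : ℕ → ℝ≥0∞} (c u : ℕ → ℝ)

lemma weightedL1_ALalpha_le (hρ : Monotone ρ) :
    weightedL1 ρ (ALalpha c u) ≤ 4 * weightedL1 ρ (c * u) := by
  set W := weightedL1 ρ (c * u)
  have h0 : ρ 0 * ‖ALalpha c u 0‖ₑ ≤ 2 * W := by
    calc ρ 0 * ‖ALalpha c u 0‖ₑ
        ≤ ρ 0 * ‖∑' j, if 1 ≤ j then (c * u) j else 0‖ₑ + ρ 0 * ‖(c * u) 1‖ₑ := by
          rw [ALalpha, if_pos rfl, ← mul_add]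
          gcongr
          exact enorm_add_le _ _
      _ ≤ W + W := by
          gcongr
          · exact mul_enorm_tsum_ite_le_weightedL1 _ hρ
          · exact (mul_le_mul_left (hρ zero_le_one) _).trans (le_weightedL1 _ 1)
      _ = 2 * W := (two_mul W).symm
  have hsucc : ∑' k, ρ (k + 1) * ‖ALalpha c u (k + 1)‖ₑ ≤ 2 * W := by
    calc ∑' k, ρ (k + 1) * ‖ALalpha c u (k + 1)‖ₑ
        ≤ ∑' k, (ρ (k + 2) * ‖(c * u) (k + 2)‖ₑ + ρ (k + 1) * ‖(c * u) (k + 1)‖ₑ) := by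
          refine ENNReal.tsum_le_tsum fun k => ?_
          rw [ALalpha, if_neg k.succ_ne_zero]
          calc ρ (k + 1) * ‖c (k + 1 + 1) * u (k + 1 + 1) - c (k + 1) * u (k + 1)‖ₑ
              ≤ ρ (k + 1) * ‖(c * u) (k + 2)‖ₑ + ρ (k + 1) * ‖(c * u) (k + 1)‖ₑ := by
                rw [← mul_add]; gcongr; exact enorm_sub_le
            _ ≤ _ := by gcongr; exact hρ k.succ.le_succ
      _ ≤ W + W := by
          rw [ENNReal.tsum_add]
          exact add_le_add (weightedL1_shift_le _ 2) (weightedL1_shift_le _ 1)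
      _ = 2 * W := (two_mul W).symm
  calc weightedL1 ρ (ALalpha c u) ≤ 2 * W + 2 * W := by
        rw [weightedL1_eq_zero_add]; exact add_le_add h0 hsucc
    _ = 4 * W := by ring

lemma weightedL1_ALbeta_le (hρ : Monotone ρ) (hρ₂ : ∀ k, ρ (k + 1) ≤ 2 * ρ k) :
    weightedL1 ρ (ALbeta c u) ≤ 6 * weightedL1 ρ (c * u) := by
  set W := weightedL1 ρ (c * u)
  have h0 : ρ 0 * ‖ALbeta c u 0‖ₑ ≤ 3 * W := by
    have hv : ‖-2 * c 0 * u 0‖ₑ = 2 * ‖(c * u) 0‖ₑ := by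
      rw [mul_assoc, enorm_mul, enorm_neg, Pi.mul_apply]; simp [Real.enorm_eq_ofReal_abs]
    calc ρ 0 * ‖ALbeta c u 0‖ₑ
        ≤ 2 * (ρ 0 * ‖(c * u) 0‖ₑ) + ρ 0 * ‖∑' j, if 1 ≤ j then (c * u) j else 0‖ₑ := by
          rw [ALbeta, if_pos rfl, mul_left_comm, ← hv, ← mul_add]
          gcongr
          exact enorm_sub_le
      _ ≤ 2 * W + W := by
          gcongr
          · exact le_weightedL1 _ 0
          · exact mul_enorm_tsum_ite_le_weightedL1 _ hρ
      _ = 3 * W := by ring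
  have hsucc : ∑' k, ρ (k + 1) * ‖ALbeta c u (k + 1)‖ₑ ≤ 3 * W := by
    calc ∑' k, ρ (k + 1) * ‖ALbeta c u (k + 1)‖ₑ
        ≤ ∑' k, (2 * (ρ k * ‖(c * u) k‖ₑ) + ρ (k + 1) * ‖(c * u) (k + 1)‖ₑ) := by
          refine ENNReal.tsum_le_tsum fun k => ?_
          rw [ALbeta, if_neg k.succ_ne_zero, Nat.add_sub_cancel]
          calc ρ (k + 1) * ‖c k * u k - c (k + 1) * u (k + 1)‖ₑ
              ≤ ρ (k + 1) * ‖(c * u) k‖ₑ + ρ (k + 1) * ‖(c * u) (k + 1)‖ₑ := by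
                rw [← mul_add]; gcongr; exact enorm_sub_le
            _ ≤ _ := by rw [← mul_assoc]; gcongr; exact hρ₂ k
      _ ≤ 2 * W + W := by
          rw [ENNReal.tsum_add, ENNReal.tsum_mul_left]
          gcongr
          · rfl
          · exact weightedL1_shift_le _ 1
      _ = 3 * W := by ring
  calc weightedL1 ρ (ALbeta c u) ≤ 3 * W + 3 * W := by
        rw [weightedL1_eq_zero_add]; exact add_le_add h0 hsucc
    _ = 6 * W := by ring

end

def WeightedL1Bounded (C : ℝ≥0∞) (T : (ℕ → ℝ) → ℕ → ℝ) : Prop :=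
  ∀ ρ : ℕ → ℝ≥0∞, Monotone ρ → (∀ k, ρ (k + 1) ≤ 2 * ρ k) →
    ∀ u, weightedL1 ρ (T u) ≤ C * weightedL1 (ρ * sqrtWeight) u

lemma weightedL1Bounded_ALalpha {C : ℝ≥0∞} {c : ℕ → ℝ} (hc : ∀ k, ‖c k‖ₑ ≤ C * sqrtWeight k) :
    WeightedL1Bounded (4 * C) (ALalpha c) := fun ρ hρ _ u =>
  (weightedL1_ALalpha_le c u hρ).trans <| by
    rw [mul_assoc]; gcongr; exact weightedL1_mul_le hc u

lemma weightedL1Bounded_ALbeta {C : ℝ≥0∞} {c : ℕ → ℝ} (hc : ∀ k, ‖c k‖ₑ ≤ C * sqrtWeight k) :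
    WeightedL1Bounded (6 * C) (ALbeta c) := fun ρ hρ hρ₂ u =>
  (weightedL1_ALbeta_le c u hρ hρ₂).trans <| by
    rw [mul_assoc]; gcongr; exact weightedL1_mul_le hc u

namespace WeightedL1Bounded

variable {C C' : ℝ≥0∞} {T T' : (ℕ → ℝ) → ℕ → ℝ}

lemma mono (hT : WeightedL1Bounded C T) (hC : C ≤ C') : WeightedL1Bounded C' T :=
  fun ρ hρ hρ₂ u => (hT ρ hρ hρ₂ u).trans (by gcongr)

lemma weightedL1_one_le (hT : WeightedL1Bounded C T) (u : ℕ → ℝ) :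
    weightedL1 1 (T u) ≤ C * weightedL1 (sqrtWeight * sqrtWeight) u := by
  refine (hT 1 monotone_const (fun _ => by norm_num) u).trans ?_
  rw [one_mul]
  gcongr
  exact weightedL1_mono (fun k => le_mul_of_one_le_left' (one_le_sqrtWeight k)) u

lemma weightedL1_one_comp_le (hT : WeightedL1Bounded C T) (hT' : WeightedL1Bounded C' T')
    (u : ℕ → ℝ) :
    weightedL1 1 (T (T' u)) ≤ C * C' * weightedL1 (sqrtWeight * sqrtWeight) u := by
  refine (hT 1 monotone_const (fun _ => by norm_num) (T' u)).trans ?_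
  rw [one_mul, mul_assoc]
  gcongr
  exact hT' sqrtWeight sqrtWeight_mono sqrtWeight_succ_le u

end WeightedL1Bounded

end BeckerDoring

open BeckerDoring

theorem stmt8_general (a b : ℕ → ℝ) (γ K : ℝ) (hH2 : HypH2 a b γ K)
    (Qstar : ℝ) (hQstar : 0 ≤ Qstar) :
    ∃ R : ℝ, 0 ≤ R ∧
      ∀ w : Hsp, memQset w → Qmass w ≤ Qstar →
        (Summable (fun k => (ALalpha a w k) ^ 2) ∧ l2norm (ALalpha a w) ≤ R) ∧
        (Summable (fun k => (ALbeta b w k) ^ 2) ∧ l2norm (ALbeta b w) ≤ R) ∧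
        (Summable (fun k => (ALalpha a (ALalpha a w) k) ^ 2) ∧
          l2norm (ALalpha a (ALalpha a w)) ≤ R) ∧
        (Summable (fun k => (ALalpha a (ALbeta b w) k) ^ 2) ∧
          l2norm (ALalpha a (ALbeta b w)) ≤ R) ∧
        (Summable (fun k => (ALbeta b (ALalpha a w) k) ^ 2) ∧
          l2norm (ALbeta b (ALalpha a w)) ≤ R) ∧
        (Summable (fun k => (ALbeta b (ALbeta b w) k) ^ 2) ∧
          l2norm (ALbeta b (ALbeta b w)) ≤ R) := by
  obtain ⟨-, hγ, hK, hab⟩ := hH2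
  have hC : ENNReal.ofReal (6 * K) = 6 * ENNReal.ofReal K := by
    rw [ENNReal.ofReal_mul (by norm_num), ENNReal.ofReal_ofNat]
  set C := ENNReal.ofReal (6 * K)
  have hα : WeightedL1Bounded C (ALalpha a) :=
    (weightedL1Bounded_ALalpha fun k =>
      enorm_le_ofReal_mul_sqrtWeight (hab k).1 hK.le hγ (hab k).2.1).mono
      (by rw [hC]; gcongr; norm_num)
  have hβ : WeightedL1Bounded C (ALbeta b) :=
    hC ▸ weightedL1Bounded_ALbeta fun k =>
      enorm_le_ofReal_mul_sqrtWeight (hab k).2.2.1 hK.le hγ (hab k).2.2.2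
  set R := (6 * K + 6 * K * (6 * K)) * Qstar
  have hR : 0 ≤ R := by positivity
  have hCR : C * ENNReal.ofReal Qstar ≤ ENNReal.ofReal R := by
    rw [← ENNReal.ofReal_mul (by positivity)]
    gcongr
    nlinarith
  have hCCR : C * C * ENNReal.ofReal Qstar ≤ ENNReal.ofReal R := by
    rw [← ENNReal.ofReal_mul (by positivity), ← ENNReal.ofReal_mul (by positivity)]
    gcongr
    nlinarith
  refine ⟨R, hR, fun w hw hQ => ?_⟩
  have hwQ : weightedL1 (sqrtWeight * sqrtWeight) w ≤ ENNReal.ofReal Qstar :=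
    (weightedL1_sqrtWeight_mul_self hw).trans_le (ENNReal.ofReal_le_ofReal hQ)
  have once {T} (hT : WeightedL1Bounded C T) :
      Summable (fun k => T w k ^ 2) ∧ l2norm (T w) ≤ R :=
    summable_sq_and_l2norm_le hR <| (hT.weightedL1_one_le w).trans <|
      (by gcongr : _ ≤ C * ENNReal.ofReal Qstar).trans hCR
  have twice {T T'} (hT : WeightedL1Bounded C T) (hT' : WeightedL1Bounded C T') :
      Summable (fun k => T (T' w) k ^ 2) ∧ l2norm (T (T' w)) ≤ R :=
    summable_sq_and_l2norm_le hR <| (hT.weightedL1_one_comp_le hT' w).trans <|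
      (by gcongr : _ ≤ C * C * ENNReal.ofReal Qstar).trans hCCR
  exact ⟨once hα, once hβ, twice hα hα, twice hα hβ, twice hβ hα, twice hβ hβ⟩

/-- Under H1 and H2, for each `Q* ≥ 0` there is `R(Q*) ≥ 0` bounding
`‖A_L^α w‖, ‖A_L^β w‖, ‖(A_L^α)² w‖, ‖A_L^α A_L^β w‖, ‖A_L^β A_L^α w‖, ‖(A_L^β)² w‖`
for every `w ∈ 𝒬` with `Q(w) ≤ Q*` (each image being square-summable). -/
theorem stmt8 (a b : ℕ → ℝ) (B γ K : ℝ) (hH1 : HypH1 a b B) (hH2 : HypH2 a b γ K)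
    (Qstar : ℝ) (hQstar : 0 ≤ Qstar) :
    ∃ R : ℝ, 0 ≤ R ∧
      ∀ w : Hsp, memQset w → Qmass w ≤ Qstar →
        (Summable (fun k => (ALalpha a w k) ^ 2) ∧ l2norm (ALalpha a w) ≤ R) ∧
        (Summable (fun k => (ALbeta b w k) ^ 2) ∧ l2norm (ALbeta b w) ≤ R) ∧
        (Summable (fun k => (ALalpha a (ALalpha a w) k) ^ 2) ∧
          l2norm (ALalpha a (ALalpha a w)) ≤ R) ∧
        (Summable (fun k => (ALalpha a (ALbeta b w) k) ^ 2) ∧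
          l2norm (ALalpha a (ALbeta b w)) ≤ R) ∧
        (Summable (fun k => (ALbeta b (ALalpha a w) k) ^ 2) ∧
          l2norm (ALbeta b (ALalpha a w)) ≤ R) ∧
        (Summable (fun k => (ALbeta b (ALbeta b w) k) ^ 2) ∧
          l2norm (ALbeta b (ALbeta b w)) ≤ R) :=
  stmt8_general a b γ K hH2 Qstar hQstar
end
end

section
/- Fix Q* > 0 and suppose Assumptions H1 and H2 hold with β₁ > 0. Then there exists a constant 𝓑(Q*) ≥ 0 such that for any v ∈ 𝒬 with Q(v) ≤ Q*, v₁ ≥ 0 and (v₂, v₃, …) ≠ (0, 0, …), the solution y(t) = φ_t^{(v₂,…)}(v₁) of the Riccati equation y' = −a y² − b(v) y + c(v), y(0) = v₁, with a = 2β₁, b(v) = Σ_{n≥2} β_n v_n and c(v) = Σ_{n≥2} α_n v_n + α₂ v₂, remains nonnegative for all t ≥ 0, and |y(t)|, |y'(t)| and |y''(t)| are all bounded by 𝓑(Q*) uniformly in t ≥ 0. -/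
noncomputable section
open Set

/-- `y` is the solution `t ↦ φ_t^{(v₂,…)}(v₁)` of the first subdynamics (a Riccati
equation) `dy/dt = -a y² - b(v) y + c(v)`, `y(0) = v₁`, with `a = 2β₁`,
`b(v) = Σ_{n≥2} β_n v_n`, `c(v) = Σ_{n≥2} α_n v_n + α₂ v₂`. -/
def IsPhiSol (a b : ℕ → ℝ) (v : ℕ → ℝ) (y : ℝ → ℝ) : Prop :=
  y 0 = v 0 ∧
    ∀ t ∈ Ici (0 : ℝ),
      HasDerivWithinAt y
        (-2 * b 0 * (y t) ^ 2 - (∑' (j : ℕ), if 1 ≤ j then b j * v j else 0) * y t +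
          ((∑' (j : ℕ), if 1 ≤ j then a j * v j else 0) + a 1 * v 1))
        (Ici 0) t

/-! The Riccati field `F(y) = -2β y² - b y + c` with `β > 0` and `b, c ≥ 0` satisfies
`F(M) < 0` at every level `M` with `c < 2β M²`, and `F(y) ≥ 2β y` for `-1 ≤ y < 0`; by
the fencing theorems for right derivatives, `[0, M]` is then forward invariant. Under H2 the
coefficients obey `b(v), c(v) ≤ 2K Q(v)`, so `M` can be chosen in terms of `Q*` alone, and
the bounds on `y' = F(y)` and `y'' = F'(y) F(y)` follow on `[0, M]`. -/

def riccatiField (β b c y : ℝ) : ℝ := -2 * β * y ^ 2 - b * y + c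

lemma nonneg_of_hasDerivWithinAt_of_mul_le {y y' : ℝ → ℝ} {L : ℝ}
    (hy : ∀ t ∈ Ici (0 : ℝ), HasDerivWithinAt y (y' t) (Ici 0) t) (h0 : 0 ≤ y 0)
    (hy' : ∀ t ∈ Ici (0 : ℝ), -1 ≤ y t → y t < 0 → L * y t ≤ y' t) :
    ∀ t ∈ Ici (0 : ℝ), 0 ≤ y t := by
  intro s hs
  -- `-y` is fenced by `δ e^{(|L|+1)(t-s)} ≤ δ` on `[0, s]`, for every `δ ∈ (0, 1]`
  suffices h : ∀ δ ∈ Ioc (0 : ℝ) 1, -y s ≤ δ by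
    by_contra! hneg
    have := h (min (-y s / 2) 1) ⟨lt_min (by linarith) one_pos, min_le_right _ _⟩
    linarith [min_le_left (-y s / 2) 1]
  rintro δ ⟨hδ0, hδ1⟩
  set B : ℝ → ℝ := fun t => δ * Real.exp ((|L| + 1) * (t - s))
  have hB : ∀ t, HasDerivAt B ((|L| + 1) * B t) t := fun t =>
    ((((hasDerivAt_id' t).sub_const s).const_mul (|L| + 1)).exp.const_mul δ).congr_deriv
      (by simp only [B]; ring)
  have hle := image_le_of_deriv_right_lt_deriv_boundary (a := 0) (b := s) (f := fun t => -y t)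
    (fun t ht => (hy t ht.1).continuousWithinAt.neg.mono Icc_subset_Ici_self)
    (fun t ht => (hy t ht.1).neg.mono (Ici_subset_Ici.mpr ht.1)) (f' := fun t => -y' t)
    (by simp only [B]; nlinarith [Real.exp_pos ((|L| + 1) * (0 - s))]) hB ?_ ⟨hs, le_rfl⟩
  · simpa [B] using hle
  rintro t ⟨ht0, hts⟩ hyB
  have hBpos : 0 < B t := mul_pos hδ0 (Real.exp_pos _)
  have hB1 : B t ≤ 1 := by
    have : Real.exp ((|L| + 1) * (t - s)) ≤ 1 :=
      Real.exp_le_one_iff.mpr (mul_nonpos_of_nonneg_of_nonpos (by positivity) (by linarith))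
    exact (mul_le_of_le_one_right hδ0.le this).trans hδ1
  have hyt := hy' t ht0 (by linarith) (by linarith)
  have hyt_eq : y t = -B t := by linarith
  rw [hyt_eq] at hyt
  nlinarith [mul_le_mul_of_nonneg_right (le_abs_self L) hBpos.le]

lemma riccati_mem_Icc {β b c M : ℝ} {y : ℝ → ℝ} (hβ : 0 ≤ β) (hb : 0 ≤ b) (hc : 0 ≤ c)
    (hcM : c < 2 * β * M ^ 2 + b * M) (h0 : y 0 ∈ Icc 0 M)
    (hy : ∀ t ∈ Ici (0 : ℝ), HasDerivWithinAt y (riccatiField β b c (y t)) (Ici 0) t) :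
    ∀ t ∈ Ici (0 : ℝ), y t ∈ Icc 0 M := by
  intro s hs
  refine ⟨nonneg_of_hasDerivWithinAt_of_mul_le hy h0.1 (L := 2 * β) ?_ s hs, ?_⟩
  · intro t _ hy1 hy0
    unfold riccatiField
    nlinarith [mul_nonneg hβ (mul_nonneg (neg_nonneg.mpr hy0.le) (neg_le_iff_add_nonneg.mp hy1))]
  · refine image_le_of_deriv_right_lt_deriv_boundary (a := 0) (b := s) (B' := fun _ => 0)
      (fun t ht => (hy t ht.1).continuousWithinAt.mono Icc_subset_Ici_self)
      (fun t ht => (hy t ht.1).mono (Ici_subset_Ici.mpr ht.1)) h0.2 (fun _ => hasDerivAt_const _ M)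
      ?_ ⟨hs, le_rfl⟩
    intro t _ hyM
    simp only [riccatiField, hyM]
    linarith

section RiccatiBounds

variable {β b c y M bmax cmax : ℝ}

lemma abs_riccatiField_le (hβ : 0 ≤ β) (hb : b ∈ Icc 0 bmax) (hc : c ∈ Icc 0 cmax)
    (hy : y ∈ Icc 0 M) : |riccatiField β b c y| ≤ 2 * β * M ^ 2 + bmax * M + cmax := by
  obtain ⟨hy0, hyM⟩ := hy
  have hy2 : y ^ 2 ≤ M ^ 2 := pow_le_pow_left₀ hy0 hyM 2
  have hby : b * y ≤ bmax * M := mul_le_mul hb.2 hyM hy0 (hb.1.trans hb.2)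
  rw [abs_le, riccatiField]
  constructor <;> nlinarith [mul_nonneg hb.1 hy0, mul_le_mul_of_nonneg_left hy2 hβ, hc.1, hc.2]

lemma abs_riccatiField_deriv_le (hβ : 0 ≤ β) (hb : b ∈ Icc 0 bmax) (hy : y ∈ Icc 0 M) :
    |-2 * (2 * β) * y - b| ≤ 2 * (2 * β) * M + bmax := by
  rw [abs_le]
  constructor <;> nlinarith [mul_le_mul_of_nonneg_left hy.2 hβ, mul_nonneg hβ hy.1, hb.1, hb.2]

end RiccatiBounds

lemma exists_ge_lt_two_mul_sq {β : ℝ} (hβ : 0 < β) (Q C : ℝ) :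
    ∃ M, Q ≤ M ∧ 0 ≤ M ∧ C < 2 * β * M ^ 2 := by
  have hC : 0 ≤ |C| / (2 * β) := by positivity
  set M := max Q 1 + |C| / (2 * β)
  have hM1 : 1 ≤ M := by linarith [le_max_right Q 1]
  -- `2βM² ≥ 2βM = 2β max(Q, 1) + |C| > C`
  have hβM : 2 * β * M = 2 * β * max Q 1 + |C| := by
    simp only [M]; field_simp
  refine ⟨M, by linarith [le_max_left Q 1], by linarith, ?_⟩
  nlinarith [le_abs_self C, le_max_right Q 1,
    mul_le_mul_of_nonneg_left hM1 (by positivity : 0 ≤ 2 * β * M)]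

lemma memQset.mul_le_Qmass {v : ℕ → ℝ} (hv : memQset v) (k : ℕ) :
    ((k : ℝ) + 1) * v k ≤ Qmass v :=
  hv.2.le_tsum k fun j _ => mul_nonneg (by positivity) (hv.1 j)

lemma memQset.tsum_weighted_mem_Icc {v c : ℕ → ℝ} {K : ℝ} (hv : memQset v)
    (hc : ∀ n, 0 ≤ c n) (hcK : ∀ n, c n ≤ K * ((n : ℝ) + 1)) :
    (∑' j, if 1 ≤ j then c j * v j else 0) ∈ Icc 0 (K * Qmass v) := by
  have hterm : ∀ j, 0 ≤ (if 1 ≤ j then c j * v j else 0) ∧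
      (if 1 ≤ j then c j * v j else 0) ≤ K * (((j : ℝ) + 1) * v j) := fun j => by
    have hcv : 0 ≤ c j * v j := mul_nonneg (hc j) (hv.1 j)
    have hle : c j * v j ≤ K * (((j : ℝ) + 1) * v j) := by nlinarith [hcK j, hv.1 j]
    split_ifs
    · exact ⟨hcv, hle⟩
    · exact ⟨le_rfl, hcv.trans hle⟩
  have hsum := hv.2.mul_left K
  refine ⟨tsum_nonneg fun j => (hterm j).1, ?_⟩
  rw [Qmass, ← tsum_mul_left]
  exact (hsum.of_nonneg_of_le (fun j => (hterm j).1) (fun j => (hterm j).2)).tsum_le_tsum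
    (fun j => (hterm j).2) hsum

lemma HypH2.le_mul_succ {a b : ℕ → ℝ} {γ K : ℝ} (h : HypH2 a b γ K) (n : ℕ) :
    a n ≤ K * ((n : ℝ) + 1) ∧ b n ≤ K * ((n : ℝ) + 1) := by
  obtain ⟨-, hγ, hK, hab⟩ := h
  have hpow : K * ((n : ℝ) + 1) ^ γ ≤ K * ((n : ℝ) + 1) :=
    mul_le_mul_of_nonneg_left (Real.rpow_le_self_of_one_le (by simp) (by linarith)) hK.le
  exact ⟨(hab n).2.1.trans hpow, (hab n).2.2.2.trans hpow⟩

lemma HypH2.source_mem_Icc {a b : ℕ → ℝ} {γ K : ℝ} (h : HypH2 a b γ K) {v : ℕ → ℝ}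
    (hv : memQset v) :
    (∑' j, if 1 ≤ j then a j * v j else 0) + a 1 * v 1 ∈ Icc 0 (2 * K * Qmass v) := by
  have hsum := hv.tsum_weighted_mem_Icc (fun n => (h.2.2.2 n).1) fun n => (h.le_mul_succ n).1
  have ha1 : a 1 * v 1 ∈ Icc 0 (K * Qmass v) := by
    have h1 := h.le_mul_succ 1
    have h2 := hv.mul_le_Qmass 1
    push_cast at h1 h2
    exact ⟨mul_nonneg (h.2.2.2 1).1 (hv.1 1), by nlinarith [hv.1 1, h.2.2.1]⟩
  constructor <;> linarith [hsum.1, hsum.2, ha1.1, ha1.2]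

theorem stmt9_general (a b : ℕ → ℝ) (γ K : ℝ) (hH2 : HypH2 a b γ K)
    (hβ1 : 0 < b 0) (Qstar : ℝ) (hQstar : 0 < Qstar) :
    ∃ Bnd : ℝ, 0 ≤ Bnd ∧
      ∀ v : Hsp, memQset v → Qmass v ≤ Qstar → 0 ≤ v 0 → (∃ k, 1 ≤ k ∧ v k ≠ 0) →
        ∀ y : ℝ → ℝ, IsPhiSol a b v y →
          ∀ t ∈ Ici (0 : ℝ),
            0 ≤ y t ∧ |y t| ≤ Bnd ∧
            |(-2 * b 0 * (y t) ^ 2 -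
                (∑' (j : ℕ), if 1 ≤ j then b j * v j else 0) * y t +
                ((∑' (j : ℕ), if 1 ≤ j then a j * v j else 0) + a 1 * v 1))| ≤ Bnd ∧
            |((-2 * (2 * b 0) * y t -
                  (∑' (j : ℕ), if 1 ≤ j then b j * v j else 0)) *
                (-2 * b 0 * (y t) ^ 2 -
                  (∑' (j : ℕ), if 1 ≤ j then b j * v j else 0) * y t +
                  ((∑' (j : ℕ), if 1 ≤ j then a j * v j else 0) + a 1 * v 1)))| ≤
              Bnd := by
  have hK : 0 < K := hH2.2.2.1
  obtain ⟨M, hQM, hM0, hM⟩ := exists_ge_lt_two_mul_sq hβ1 Qstar (2 * K * Qstar)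
  set D := 2 * b 0 * M ^ 2 + K * Qstar * M + 2 * K * Qstar
  refine ⟨M + D + (2 * (2 * b 0) * M + K * Qstar) * D, by positivity, ?_⟩
  intro v hv hQ hv0 _ y ⟨hy0, hy⟩ t ht
  have hKQ : K * Qmass v ≤ K * Qstar := mul_le_mul_of_nonneg_left hQ hK.le
  have hdrift := hv.tsum_weighted_mem_Icc (fun n => (hH2.2.2.2 n).2.2.1) fun n =>
    (hH2.le_mul_succ n).2
  have hsource := hH2.source_mem_Icc hv
  have hv0M : y 0 ∈ Icc 0 M := by
    have hv0Q := hv.mul_le_Qmass 0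
    push_cast at hv0Q
    exact ⟨hy0 ▸ hv0, by linarith⟩
  have hyt := riccati_mem_Icc hβ1.le hdrift.1 hsource.1
    (by nlinarith [hsource.2, mul_nonneg hdrift.1 hM0]) hv0M hy t ht
  have hF := abs_riccatiField_le hβ1.le ⟨hdrift.1, hdrift.2.trans hKQ⟩
    ⟨hsource.1, hsource.2.trans (by linarith : 2 * K * Qmass v ≤ 2 * K * Qstar)⟩ hyt
  have hF' := abs_riccatiField_deriv_le hβ1.le ⟨hdrift.1, hdrift.2.trans hKQ⟩ hyt
  rw [riccatiField] at hF
  have hD : 0 ≤ D := by positivity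
  have hE : 0 ≤ (2 * (2 * b 0) * M + K * Qstar) * D := by positivity
  refine ⟨hyt.1, by rw [abs_of_nonneg hyt.1]; linarith [hyt.2], by linarith, ?_⟩
  rw [abs_mul]
  linarith [mul_le_mul hF' hF (abs_nonneg _) (by positivity)]

/-- Under H1 and H2 with `β₁ > 0` and `Q* > 0`, there is a constant `𝓑(Q*) ≥ 0` such
that for every `v ∈ 𝒬` with `Q(v) ≤ Q*`, `v₁ ≥ 0` and `(v₂, v₃, …) ≠ 0`, the solution
`y(t) = φ_t^{(v₂,…)}(v₁)` of the Riccati equation stays nonnegative, and `|y(t)|`,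
`|y'(t)| = |-a y² - b(v) y + c(v)|` and `|y''(t)| = |(-2a y - b(v)) y'|` are bounded by
`𝓑(Q*)` uniformly in `t ≥ 0`. -/
theorem stmt9 (a b : ℕ → ℝ) (B γ K : ℝ) (hH1 : HypH1 a b B) (hH2 : HypH2 a b γ K)
    (hβ1 : 0 < b 0) (Qstar : ℝ) (hQstar : 0 < Qstar) :
    ∃ Bnd : ℝ, 0 ≤ Bnd ∧
      ∀ v : Hsp, memQset v → Qmass v ≤ Qstar → 0 ≤ v 0 → (∃ k, 1 ≤ k ∧ v k ≠ 0) →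
        ∀ y : ℝ → ℝ, IsPhiSol a b v y →
          ∀ t ∈ Ici (0 : ℝ),
            0 ≤ y t ∧ |y t| ≤ Bnd ∧
            |(-2 * b 0 * (y t) ^ 2 -
                (∑' (j : ℕ), if 1 ≤ j then b j * v j else 0) * y t +
                ((∑' (j : ℕ), if 1 ≤ j then a j * v j else 0) + a 1 * v 1))| ≤ Bnd ∧
            |((-2 * (2 * b 0) * y t -
                  (∑' (j : ℕ), if 1 ≤ j then b j * v j else 0)) *
                (-2 * b 0 * (y t) ^ 2 -
                  (∑' (j : ℕ), if 1 ≤ j then b j * v j else 0) * y t +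
                  ((∑' (j : ℕ), if 1 ≤ j then a j * v j else 0) + a 1 * v 1)))| ≤
              Bnd :=
  stmt9_general a b γ K hH2 hβ1 Qstar hQstar
end
end

section
/- Fix b ≥ 0 and consider v ∈ 𝒬 such that there exists k ≥ 2 with v_k > 0. Then for all t ≥ 0 there exists ℓ ≥ 2 such that (χ_t^b(v))_ℓ > 0, where χ_t^b is the flow of the second subdynamics with u₁ frozen at b. -/
noncomputable section
open Set

/-- `w` is a classical solution `t ↦ χ_t^c(w(0))` of the second subdynamics with the
first concentration frozen at `c`: `du₁/dt = 0` and, for `n ≥ 2`,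
`du_n/dt = β_{n-1} c u_{n-1} - (β_n c + α_n) u_n + α_{n+1} u_{n+1}`. -/
def IsChiSol (a b : ℕ → ℝ) (c : ℝ) (w : ℝ → Hsp) : Prop :=
  ∃ w' : ℝ → Hsp,
    ∀ t ∈ Ici (0 : ℝ), HasDerivWithinAt w (w' t) (Ici 0) t ∧
      (w' t) 0 = 0 ∧
      ∀ k, 1 ≤ k →
        (w' t) k = b (k - 1) * c * (w t) (k - 1) - (b k * c + a k) * (w t) k +
          a (k + 1) * (w t) (k + 1)

/-! Once every coordinate of `w t` is known to be nonnegative, the equation for `w_k` gives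
`w_k' ≥ -(β_k c + α_k) w_k`, so `w_k (t) ≥ v_k exp (-(β_k c + α_k) t) > 0`. Nonnegativity comes
from the energy `E t = ‖(w t)⁻‖²`: its derivative `2 ⟪(w t)⁻, w' t⟫` is at most `B (1 + c) E t`.
On partial sums this is a summation by parts whose boundary term `α_n ((w t)_n⁻)²` is small
infinitely often, because `α` grows at most linearly by H1 while `∑ ((w t)_n⁻)²` converges.
Since `E 0 = 0`, Grönwall's inequality forces `E ≡ 0`. -/

namespace BeckerDoring

open Filter Finset Topology Real

lemma le_add_mul_of_abs_sub_le {a : ℕ → ℝ} {B : ℝ} (h : ∀ n, |a (n + 1) - a n| ≤ B) (n : ℕ) :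
    a n ≤ a 0 + B * n := by
  induction n with
  | zero => simp
  | succ n ih => push_cast; linarith [(abs_le.1 (h n)).2]

lemma frequently_mul_lt_of_summable {f g : ℕ → ℝ} (hf : Summable f) (hf0 : ∀ n, 0 ≤ f n)
    {C : ℝ} (hg : ∀ n, g n ≤ C * (n + 1)) {ε : ℝ} (hε : 0 < ε) :
    ∃ᶠ n in atTop, g n * f n < ε := by
  by_contra h
  rw [not_frequently] at h
  refine Real.not_summable_natCast_inv ((summable_nat_add_iff 1).1 ?_)
  refine Summable.of_norm_bounded_eventually_nat (hf.mul_left (C / ε)) ?_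
  filter_upwards [h] with n hn
  have hle : ε ≤ C * (n + 1) * f n :=
    (not_lt.1 hn).trans (mul_le_mul_of_nonneg_right (hg n) (hf0 n))
  rw [Real.norm_of_nonneg (by positivity), Nat.cast_add_one, inv_le_iff_one_le_mul₀ (by positivity)]
  rwa [show C / ε * f n * (n + 1) = C * (n + 1) * f n / ε by ring, le_div_iff₀ hε, one_mul]

lemma min_zero_mul_le (x y z p r s : ℝ) (hp : 0 ≤ p) (hr : 0 ≤ r) :
    min y 0 * (p * x - s * y + r * z) ≤
      p / 2 * (min x 0 ^ 2 + min y 0 ^ 2) - s * min y 0 ^ 2 +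
        r / 2 * (min z 0 ^ 2 + min y 0 ^ 2) := by
  have hy : min y 0 * y = min y 0 ^ 2 := by
    rcases le_total y 0 with h | h <;> simp [h, sq]
  have hx : min y 0 * x ≤ (min x 0 ^ 2 + min y 0 ^ 2) / 2 := by
    nlinarith [min_le_left x 0, min_le_right y 0, sq_nonneg (min x 0 - min y 0)]
  have hz : min y 0 * z ≤ (min z 0 ^ 2 + min y 0 ^ 2) / 2 := by
    nlinarith [min_le_left z 0, min_le_right y 0, sq_nonneg (min z 0 - min y 0)]
  rw [show min y 0 * (p * x - s * y + r * z)
      = p * (min y 0 * x) - s * (min y 0 * y) + r * (min y 0 * z) by ring, hy]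
  linarith [mul_le_mul_of_nonneg_left hx hp, mul_le_mul_of_nonneg_left hz hr]

lemma min_zero_sq_add_sub_le (x e : ℝ) :
    |min (x + e) 0 ^ 2 - min x 0 ^ 2 - 2 * min x 0 * e| ≤ e ^ 2 := by
  rcases le_total x 0 with hx | hx <;> rcases le_total (x + e) 0 with he | he <;>
    simp only [min_eq_left, min_eq_right, hx, he, abs_le] <;>
    constructor <;> nlinarith

lemma le_mul_exp_of_hasDerivWithinAt_le {f f' : ℝ → ℝ} {δ K : ℝ}
    (hf : ∀ t ∈ Ici (0 : ℝ), HasDerivWithinAt f (f' t) (Ici 0) t) (h0 : f 0 ≤ δ)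
    (bound : ∀ t ∈ Ici (0 : ℝ), f' t ≤ K * f t) :
    ∀ t ∈ Ici (0 : ℝ), f t ≤ δ * exp (K * t) := by
  intro t ht
  have hcont : ContinuousOn f (Icc 0 t) := fun s hs =>
    ((hf s hs.1).continuousWithinAt).mono Icc_subset_Ici_self
  have := le_gronwallBound_of_liminf_deriv_right_le (ε := 0) hcont
    (fun s hs r hr => ((hf s hs.1).mono (Ici_subset_Ici.2 hs.1)).liminf_right_slope_le hr) h0
    (fun s hs => by simpa using bound s hs.1) t ⟨ht, le_rfl⟩
  rwa [gronwallBound_ε0, sub_zero] at this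

lemma mul_exp_le_of_le_hasDerivWithinAt {f f' : ℝ → ℝ} {δ K : ℝ}
    (hf : ∀ t ∈ Ici (0 : ℝ), HasDerivWithinAt f (f' t) (Ici 0) t) (h0 : δ ≤ f 0)
    (bound : ∀ t ∈ Ici (0 : ℝ), K * f t ≤ f' t) :
    ∀ t ∈ Ici (0 : ℝ), δ * exp (K * t) ≤ f t := by
  intro t ht
  have := le_mul_exp_of_hasDerivWithinAt_le (f := fun t => -f t) (δ := -δ) (K := K)
    (fun t ht => (hf t ht).neg) (neg_le_neg h0) (fun t ht => by linarith [bound t ht]) t ht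
  linarith

lemma hasDerivWithinAt_lp_apply {w : ℝ → Hsp} {w' : Hsp} {s : Set ℝ} {t : ℝ}
    (h : HasDerivWithinAt w w' s t) (k : ℕ) : HasDerivWithinAt (fun s => w s k) (w' k) s t :=
  (lp.evalCLM ℝ (fun _ => ℝ) 2 k).hasFDerivAt.comp_hasDerivWithinAt t h

lemma hasSum_inner_lp (u v : Hsp) : HasSum (fun k => u k * v k) (inner ℝ u v) := by
  simpa [mul_comm] using lp.hasSum_inner (𝕜 := ℝ) u v

lemma hasSum_sq (u : Hsp) : HasSum (fun k => u k ^ 2) (‖u‖ ^ 2) := by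
  simpa [sq] using hasSum_inner_lp u u

/-- The coordinatewise `min (u k) 0`; it is `-u⁻` in Mathlib's lattice notation. -/
def nonposPart (u : Hsp) : Hsp :=
  ⟨fun k => min (u k) 0, (lp.memℓp u).mono' fun k => by
    rcases le_total (u k) 0 with h | h <;> simp [h]⟩

@[simp] lemma nonposPart_apply (u : Hsp) (k : ℕ) : nonposPart u k = min (u k) 0 := rfl

lemma hasFDerivAt_norm_nonposPart_sq (u : Hsp) :
    HasFDerivAt (fun u => ‖nonposPart u‖ ^ 2) ((2 : ℝ) • innerSL ℝ (nonposPart u)) u := by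
  have hbound : ∀ h : Hsp, |‖nonposPart (u + h)‖ ^ 2 - ‖nonposPart u‖ ^ 2
      - ((2 : ℝ) • innerSL ℝ (nonposPart u)) h| ≤ ‖h‖ ^ 2 := by
    intro h
    have hsum := ((hasSum_sq (nonposPart (u + h))).sub (hasSum_sq (nonposPart u))).sub
      ((hasSum_inner_lp (nonposPart u) h).mul_left 2)
    have hterm := fun k => min_zero_sq_add_sub_le (u k) (h k)
    simp only [nonposPart_apply, lp.coeFn_add, Pi.add_apply] at hsum
    simp only [FunLike.coe_smul, Pi.smul_apply, innerSL_apply_apply, smul_eq_mul]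
    refine abs_le.2 ⟨?_, hasSum_le (fun k => ?_) hsum (hasSum_sq h)⟩
    · refine neg_le.1 (hasSum_le (fun k => ?_) hsum.neg (hasSum_sq h))
      linarith [(abs_le.1 (hterm k)).1, mul_assoc 2 (min (u k) 0) (h k)]
    · linarith [(abs_le.1 (hterm k)).2, mul_assoc 2 (min (u k) 0) (h k)]
  rw [hasFDerivAt_iff_isLittleO_nhds_zero]
  refine Asymptotics.IsBigO.trans_isLittleO ?_ (Asymptotics.isLittleO_norm_pow_id one_lt_two)
  refine Asymptotics.IsBigO.of_bound 1 (Eventually.of_forall fun h => ?_)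
  simpa using hbound h

variable {a b : ℕ → ℝ} {B c : ℝ}

lemma sum_range_min_zero_mul_le (hH1 : HypH1 a b B) (hc : 0 ≤ c) {u d : ℕ → ℝ}
    (hu0 : 0 ≤ u 0) (hd0 : d 0 = 0)
    (hd : ∀ k, d (k + 1) = b k * c * u k - (b (k + 1) * c + a (k + 1)) * u (k + 1) +
      a (k + 2) * u (k + 2)) (N : ℕ) :
    ∑ k ∈ range (N + 1), min (u k) 0 * d k ≤
      B * (1 + c) / 2 * ∑ k ∈ range (N + 1), min (u k) 0 ^ 2 +
        a (N + 1) / 2 * min (u (N + 1)) 0 ^ 2 - b N * c / 2 * min (u N) 0 ^ 2 := by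
  obtain ⟨hB, hab, hΔ⟩ := hH1
  induction N with
  | zero =>
    simp only [zero_add, sum_range_one, hd0, min_eq_right hu0]
    nlinarith [(hab 1).1, sq_nonneg (min (u 1) 0)]
  | succ N ih =>
    rw [sum_range_succ, sum_range_succ (fun k => min (u k) 0 ^ 2), hd N]
    -- AM-GM on the cross terms leaves `(a (N + 2) - a (N + 1)) + (b N - b (N + 1)) c ≤ B (1 + c)`
    have hterm := min_zero_mul_le (u N) (u (N + 1)) (u (N + 2)) (b N * c)
      (a (N + 2)) (b (N + 1) * c + a (N + 1)) (mul_nonneg (hab N).2 hc) (hab (N + 2)).1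
    have ha : a (N + 2) - a (N + 1) ≤ B := (abs_le.1 (hΔ (N + 1)).1).2
    have hb : b N - b (N + 1) ≤ B := by linarith [(abs_le.1 (hΔ N).2).1]
    have hm := sq_nonneg (min (u (N + 1)) 0)
    nlinarith [mul_le_mul_of_nonneg_right ha hm,
      mul_le_mul_of_nonneg_right (mul_le_mul_of_nonneg_right hb hc) hm,
      mul_nonneg (mul_nonneg (hab (N + 1)).2 hc) hm]

lemma inner_nonposPart_le (hH1 : HypH1 a b B) (hc : 0 ≤ c) {u d : Hsp}
    (hu0 : 0 ≤ u 0) (hd0 : d 0 = 0)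
    (hd : ∀ k, d (k + 1) = b k * c * u k - (b (k + 1) * c + a (k + 1)) * u (k + 1) +
      a (k + 2) * u (k + 2)) :
    inner ℝ (nonposPart u) d ≤ B * (1 + c) / 2 * ‖nonposPart u‖ ^ 2 := by
  set m : ℕ → ℝ := fun k => min (u k) 0
  have hG := hasSum_sq (nonposPart u)
  have hrate : 0 ≤ B * (1 + c) / 2 := by have := hH1.1; positivity
  have hpartial : ∀ n, ∑ k ∈ range n, m k * d k ≤
      B * (1 + c) / 2 * ‖nonposPart u‖ ^ 2 + a n / 2 * m n ^ 2 := by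
    rintro (_ | N)
    · simp only [sum_range_zero]
      have := (hH1.2.1 0).1
      positivity
    · have hsum := sum_range_min_zero_mul_le hH1 hc hu0 hd0 hd N
      have hle := sum_le_hasSum (range (N + 1)) (fun k _ => sq_nonneg _) hG
      have := mul_nonneg (mul_nonneg (hH1.2.1 N).2 hc) (sq_nonneg (m N))
      simp only [nonposPart_apply] at hle
      nlinarith [mul_le_mul_of_nonneg_left hle hrate]
  have hgrowth : ∀ n, a n ≤ (a 0 + B) * (n + 1) := fun n => by
    have := le_add_mul_of_abs_sub_le (fun n => (hH1.2.2 n).1) n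
    nlinarith [(hH1.2.1 0).1, hH1.1, (n.cast_nonneg : (0 : ℝ) ≤ n)]
  refine le_of_forall_pos_le_add fun ε hε => ?_
  refine le_of_tendsto_of_frequently (hasSum_inner_lp (nonposPart u) d).tendsto_sum_nat ?_
  refine (frequently_mul_lt_of_summable hG.summable (fun k => sq_nonneg _) hgrowth
    (by positivity : 0 < 2 * ε)).mono fun n hn => ?_
  simp only [nonposPart_apply] at hn ⊢
  linarith [hpartial n]

variable {w : ℝ → Hsp}

theorem apply_nonneg_of_isChiSol (hH1 : HypH1 a b B) (hc : 0 ≤ c) (hchi : IsChiSol a b c w)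
    (h0 : ∀ k, 0 ≤ w 0 k) : ∀ t ∈ Ici (0 : ℝ), ∀ k, 0 ≤ w t k := by
  obtain ⟨w', hw'⟩ := hchi
  have hrhs : ∀ t ∈ Ici (0 : ℝ), ∀ k, w' t (k + 1) = b k * c * w t k -
      (b (k + 1) * c + a (k + 1)) * w t (k + 1) + a (k + 2) * w t (k + 2) := fun t ht k => by
    simpa using (hw' t ht).2.2 (k + 1) (by omega)
  have hfirst : ∀ t ∈ Ici (0 : ℝ), 0 ≤ w t 0 := fun t ht => by
    simpa using mul_exp_le_of_le_hasDerivWithinAt (K := 0)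
      (fun t ht => hasDerivWithinAt_lp_apply (hw' t ht).1 0) (h0 0)
      (fun t ht => by simp [(hw' t ht).2.1]) t ht
  have hstart : nonposPart (w 0) = 0 := lp.ext <| funext fun k => min_eq_right (h0 k)
  have henergy : ∀ t ∈ Ici (0 : ℝ), ‖nonposPart (w t)‖ ^ 2 ≤ 0 * exp (B * (1 + c) * t) :=
    le_mul_exp_of_hasDerivWithinAt_le
      (fun t ht => (hasFDerivAt_norm_nonposPart_sq (w t)).comp_hasDerivWithinAt t (hw' t ht).1)
      (by simp [hstart])
      (fun t ht => by
        have := inner_nonposPart_le hH1 hc (hfirst t ht) (hw' t ht).2.1 (hrhs t ht)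
        simp only [FunLike.coe_smul, Pi.smul_apply, innerSL_apply_apply, smul_eq_mul]
        linarith)
  intro t ht k
  have hzero : nonposPart (w t) = 0 := by
    simpa using le_antisymm ((henergy t ht).trans_eq (zero_mul _)) (sq_nonneg _)
  exact min_eq_right_iff.1 (congrFun (congrArg Subtype.val hzero) k)

theorem apply_pos_of_isChiSol (hH1 : HypH1 a b B) (hc : 0 ≤ c) (hchi : IsChiSol a b c w)
    (h0 : ∀ k, 0 ≤ w 0 k) {k : ℕ} (hk : 1 ≤ k) (hpos : 0 < w 0 k) :
    ∀ t ∈ Ici (0 : ℝ), 0 < w t k := by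
  have hnonneg := apply_nonneg_of_isChiSol hH1 hc hchi h0
  obtain ⟨w', hw'⟩ := hchi
  intro t ht
  refine (mul_pos hpos (exp_pos (-(b k * c + a k) * t))).trans_le
    (mul_exp_le_of_le_hasDerivWithinAt (fun t ht => hasDerivWithinAt_lp_apply (hw' t ht).1 k)
      le_rfl (fun s hs => ?_) t ht)
  rw [(hw' s hs).2.2 k hk]
  nlinarith [mul_nonneg (mul_nonneg (hH1.2.1 (k - 1)).2 hc) (hnonneg s hs (k - 1)),
    mul_nonneg (hH1.2.1 (k + 1)).1 (hnonneg s hs (k + 1))]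

end BeckerDoring

theorem stmt10_general (a b : ℕ → ℝ) (B : ℝ) (hH1 : HypH1 a b B)
    (c : ℝ) (hc : 0 ≤ c) (v : Hsp) (hv : memQset v) (hvk : ∃ k, 1 ≤ k ∧ v k > 0)
    (w : ℝ → Hsp) (hw0 : w 0 = v) (hchi : IsChiSol a b c w) :
    ∀ t ∈ Ici (0 : ℝ), ∃ l, 1 ≤ l ∧ (w t) l > 0 := by
  subst hw0
  obtain ⟨k, hk, hpos⟩ := hvk
  exact fun t ht => ⟨k, hk, BeckerDoring.apply_pos_of_isChiSol hH1 hc hchi hv.1 hk hpos t ht⟩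

/-- For `b ≥ 0` (here `c`) and `v ∈ 𝒬` with `v_k > 0` for some `k ≥ 2`, the flow
`χ_t^b(v)` of the second subdynamics satisfies: for all `t ≥ 0` there exists `ℓ ≥ 2`
with `(χ_t^b(v))_ℓ > 0`. -/
theorem stmt10 (a b : ℕ → ℝ) (B γ K : ℝ) (hH1 : HypH1 a b B) (hH2 : HypH2 a b γ K)
    (c : ℝ) (hc : 0 ≤ c) (v : Hsp) (hv : memQset v) (hvk : ∃ k, 1 ≤ k ∧ v k > 0)
    (w : ℝ → Hsp) (hw0 : w 0 = v) (hchi : IsChiSol a b c w) :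
    ∀ t ∈ Ici (0 : ℝ), ∃ l, 1 ≤ l ∧ (w t) l > 0 :=
  stmt10_general a b B hH1 c hc v hv hvk w hw0 hchi
end
end
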